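/- The linear operator Φ on μ1 defined by Φ(x) = x + x_2 e_{n−2k}, where x = Σ_{i=1}^{n−2k} x_i e_i + Σ_{i=1}^{2k} y_i f_i, is a local automorphism of μ1 but is not an automorphism of μ1. -/

import Mathlib

/-- Underlying space of the `p`-filiform Leibniz algebra `μ₁`:
`e`-part has `m + 4 = n - 2k` coordinates, `f`-part has `2(k+1)` coordinates
(so the paper's `k ≥ 1` is `k + 1` here, and `n = (m + 4) + 2(k + 1) ≥ 2k + 4`). -/
abbrev MuV (m k : ℕ) (K : Type*) := (Fin (m + 4) → K) × (Fin (2 * (k + 1)) → K)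

variable {K : Type*} [Field K]

/-- Basis vector `e_{i+1}` (0-indexed). -/
def eb (K : Type*) [Field K] (m k : ℕ) (i : Fin (m + 4)) : MuV m k K := (Pi.single i 1, 0)

/-- Basis vector `f_{j+1}` (0-indexed). -/
def fb (K : Type*) [Field K] (m k : ℕ) (j : Fin (2 * (k + 1))) : MuV m k K := (0, Pi.single j 1)

/-- The bracket of `μ₁`: `[e_i, e_1] = e_{i+1}` for `1 ≤ i ≤ n - 2k - 1` and
`[e_1, f_j] = f_{k+j}` for `1 ≤ j ≤ k` (paper indexing), all other products zero. -/
def mu1Br (K : Type*) [Field K] (m k : ℕ) (x y : MuV m k K) : MuV m k K :=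
  (fun i => if 1 ≤ (i : ℕ) then
      x.1 ⟨(i : ℕ) - 1, lt_of_le_of_lt (Nat.sub_le _ _) i.isLt⟩ * y.1 ⟨0, Nat.succ_pos _⟩
    else 0,
   fun j => if k + 1 ≤ (j : ℕ) then
      x.1 ⟨0, Nat.succ_pos _⟩ * y.2 ⟨(j : ℕ) - (k + 1), lt_of_le_of_lt (Nat.sub_le _ _) j.isLt⟩
    else 0)

/-- `φ` is an automorphism of `μ₁`. -/
def IsMu1Aut (m k : ℕ) (φ : MuV m k K →ₗ[K] MuV m k K) : Prop :=
  Function.Bijective φ ∧ ∀ x y, φ (mu1Br K m k x y) = mu1Br K m k (φ x) (φ y)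

/-- `Δ` is a local automorphism of `μ₁`. -/
def IsMu1LocAut (m k : ℕ) (Δ : MuV m k K →ₗ[K] MuV m k K) : Prop :=
  ∀ x, ∃ φ : MuV m k K →ₗ[K] MuV m k K, IsMu1Aut m k φ ∧ Δ x = φ x

/-!
The maps `ψ_{a,b} : x ↦ x + b x₁ e_{n-2k-1} + (a x₁ + b x₂) e_{n-2k}` are automorphisms of `μ₁`.
The bracket reads only `y₁` and the `f`-coordinates of its right argument, which `ψ_{a,b}` leaves
alone; `e_{n-2k}` is central; and `[e_{n-2k-1}, y] = y₁ e_{n-2k}`. Hence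
`[ψ x, ψ y] = [x, y] + b x₁ y₁ e_{n-2k} = ψ [x, y]`, as `[x, y]` has `e₁`-coordinate `0` and
`e₂`-coordinate `x₁ y₁`.
`Φ` agrees at `x` with `ψ_{x₂/x₁, 0}` if `x₁ ≠ 0` and with `ψ_{0,1}` if `x₁ = 0`. It is not an
automorphism: it fixes `e₁` but moves `e₂ = [e₁, e₁]`.
-/

section Mu1

variable {m k : ℕ}

@[simp]
lemma eb_fst (i j : Fin (m + 4)) : (eb K m k i).1 j = if j = i then 1 else 0 :=
  Pi.single_apply i 1 j

@[simp]
lemma eb_snd (i : Fin (m + 4)) : (eb K m k i).2 = 0 := rfl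

lemma eb_ne_zero (i : Fin (m + 4)) : eb K m k i ≠ 0 := fun h => by
  simpa using congrFun (congrArg Prod.fst h) i

lemma mu1Br_add_left (x x' y : MuV m k K) :
    mu1Br K m k (x + x') y = mu1Br K m k x y + mu1Br K m k x' y := by
  ext i <;> simp only [mu1Br, Prod.fst_add, Prod.snd_add, Pi.add_apply] <;> split_ifs <;> ring

lemma mu1Br_add_right (x y y' : MuV m k K) :
    mu1Br K m k x (y + y') = mu1Br K m k x y + mu1Br K m k x y' := by
  ext i <;> simp only [mu1Br, Prod.fst_add, Prod.snd_add, Pi.add_apply] <;> split_ifs <;> ring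

lemma mu1Br_smul_left (c : K) (x y : MuV m k K) :
    mu1Br K m k (c • x) y = c • mu1Br K m k x y := by
  ext i <;> simp only [mu1Br, Prod.smul_fst, Prod.smul_snd, Pi.smul_apply, smul_eq_mul] <;>
    split_ifs <;> ring

lemma mu1Br_smul_right (c : K) (x y : MuV m k K) :
    mu1Br K m k x (c • y) = c • mu1Br K m k x y := by
  ext i <;> simp only [mu1Br, Prod.smul_fst, Prod.smul_snd, Pi.smul_apply, smul_eq_mul] <;>
    split_ifs <;> ring

lemma mu1Br_fst_zero (x y : MuV m k K) : (mu1Br K m k x y).1 ⟨0, by omega⟩ = 0 := by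
  simp [mu1Br]

lemma mu1Br_fst_one (x y : MuV m k K) :
    (mu1Br K m k x y).1 ⟨1, Nat.one_lt_succ_succ _⟩ = x.1 ⟨0, by omega⟩ * y.1 ⟨0, by omega⟩ := by
  simp [mu1Br]

lemma mu1Br_eb_right (x : MuV m k K) {i : Fin (m + 4)} (hi : (i : ℕ) ≠ 0) :
    mu1Br K m k x (eb K m k i) = 0 := by
  ext j <;> simp [mu1Br, Fin.ext_iff, Ne.symm hi]

lemma mu1Br_eb_last_left (y : MuV m k K) :
    mu1Br K m k (eb K m k ⟨m + 3, Nat.lt_add_one _⟩) y = 0 := by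
  ext ⟨j, hj⟩
  · simp only [mu1Br, eb_fst, Fin.ext_iff]
    split_ifs <;> first | omega | simp
  · simp [mu1Br]

lemma mu1Br_eb_penultimate_left (y : MuV m k K) :
    mu1Br K m k (eb K m k ⟨m + 2, by omega⟩) y =
      y.1 ⟨0, by omega⟩ • eb K m k ⟨m + 3, Nat.lt_add_one _⟩ := by
  ext ⟨j, hj⟩
  · simp only [mu1Br, eb_fst, Prod.smul_fst, Pi.smul_apply, smul_eq_mul, Fin.ext_iff]
    split_ifs <;> first | ring1 | omega
  · simp [mu1Br, Fin.ext_iff]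

variable (m k)

def mu1Shear (a b : K) : MuV m k K →ₗ[K] MuV m k K where
  toFun x := x + (b * x.1 ⟨0, by omega⟩) • eb K m k ⟨m + 2, by omega⟩
      + (a * x.1 ⟨0, by omega⟩ + b * x.1 ⟨1, Nat.one_lt_succ_succ _⟩) •
        eb K m k ⟨m + 3, Nat.lt_add_one _⟩
  map_add' x y := by
    simp only [Prod.fst_add, Pi.add_apply]
    module
  map_smul' c x := by
    simp only [Prod.smul_fst, Pi.smul_apply, smul_eq_mul, RingHom.id_apply]
    module

variable {m k}

lemma mu1Shear_apply (a b : K) (x : MuV m k K) :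
    mu1Shear m k a b x = x + (b * x.1 ⟨0, by omega⟩) • eb K m k ⟨m + 2, by omega⟩
      + (a * x.1 ⟨0, by omega⟩ + b * x.1 ⟨1, Nat.one_lt_succ_succ _⟩) •
        eb K m k ⟨m + 3, Nat.lt_add_one _⟩ := rfl

@[simp]
lemma mu1Shear_fst_zero (a b : K) (x : MuV m k K) :
    (mu1Shear m k a b x).1 ⟨0, by omega⟩ = x.1 ⟨0, by omega⟩ := by
  simp [mu1Shear_apply]

@[simp]
lemma mu1Shear_fst_one (a b : K) (x : MuV m k K) :
    (mu1Shear m k a b x).1 ⟨1, Nat.one_lt_succ_succ _⟩ = x.1 ⟨1, Nat.one_lt_succ_succ _⟩ := by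
  simp [mu1Shear_apply]

lemma mu1Shear_mu1Shear (a b a' b' : K) (x : MuV m k K) :
    mu1Shear m k a b (mu1Shear m k a' b' x) = mu1Shear m k (a + a') (b + b') x := by
  rw [mu1Shear_apply, mu1Shear_fst_zero, mu1Shear_fst_one, mu1Shear_apply, mu1Shear_apply]
  module

lemma mu1Shear_zero_zero (x : MuV m k K) : mu1Shear m k 0 0 x = x := by
  simp [mu1Shear_apply]

lemma mu1Shear_bijective (a b : K) : Function.Bijective (mu1Shear m k a b) := by
  refine Function.bijective_iff_has_inverse.2 ⟨mu1Shear m k (-a) (-b), fun x => ?_, fun x => ?_⟩ <;>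
    simp [mu1Shear_mu1Shear, mu1Shear_zero_zero]

lemma mu1Shear_map_mu1Br (a b : K) (x y : MuV m k K) :
    mu1Shear m k a b (mu1Br K m k x y) = mu1Br K m k (mu1Shear m k a b x) (mu1Shear m k a b y) := by
  simp only [mu1Shear_apply, mu1Br_add_left, mu1Br_add_right, mu1Br_smul_left, mu1Br_smul_right,
    mu1Br_eb_right, ne_eq, Nat.add_eq_zero_iff, OfNat.ofNat_ne_zero, and_false, not_false_eq_true,
    mu1Br_eb_last_left, mu1Br_eb_penultimate_left, mu1Br_fst_zero, mu1Br_fst_one]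
  module

lemma isMu1Aut_mu1Shear (a b : K) : IsMu1Aut m k (mu1Shear m k a b) :=
  ⟨mu1Shear_bijective a b, mu1Shear_map_mu1Br a b⟩

variable (K m k)

def mu1Phi : MuV m k K →ₗ[K] MuV m k K where
  toFun x := x + x.1 ⟨1, Nat.one_lt_succ_succ _⟩ • eb K m k ⟨m + 3, Nat.lt_add_one _⟩
  map_add' x y := by
    simp only [Prod.fst_add, Pi.add_apply]
    module
  map_smul' c x := by
    simp only [Prod.smul_fst, Pi.smul_apply, smul_eq_mul, RingHom.id_apply]
    module

variable {K m k}

lemma mu1Phi_apply (x : MuV m k K) :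
    mu1Phi K m k x = x + x.1 ⟨1, Nat.one_lt_succ_succ _⟩ • eb K m k ⟨m + 3, Nat.lt_add_one _⟩ := rfl

lemma exists_mu1Shear_eq_mu1Phi (x : MuV m k K) :
    ∃ a b : K, mu1Shear m k a b x = mu1Phi K m k x := by
  by_cases hx : x.1 ⟨0, by omega⟩ = 0
  · refine ⟨0, 1, ?_⟩
    rw [mu1Shear_apply, mu1Phi_apply, hx]
    module
  · refine ⟨x.1 ⟨1, Nat.one_lt_succ_succ _⟩ / x.1 ⟨0, by omega⟩, 0, ?_⟩
    rw [mu1Shear_apply, mu1Phi_apply, div_mul_cancel₀ _ hx]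
    module

lemma isMu1LocAut_mu1Phi : IsMu1LocAut m k (mu1Phi K m k) := fun x => by
  obtain ⟨a, b, h⟩ := exists_mu1Shear_eq_mu1Phi x
  exact ⟨mu1Shear m k a b, isMu1Aut_mu1Shear a b, h.symm⟩

lemma not_isMu1Aut_mu1Phi : ¬ IsMu1Aut m k (mu1Phi K m k) := by
  rintro ⟨-, hom⟩
  set e₁ := eb K m k ⟨0, by omega⟩
  have fix_e₁ : mu1Phi K m k e₁ = e₁ := by simp [mu1Phi_apply, e₁]
  have h := hom e₁ e₁
  rw [fix_e₁, mu1Phi_apply, add_eq_left, smul_eq_zero, mu1Br_fst_one] at h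
  simpa [e₁] using h.resolve_right (eb_ne_zero _)

end Mu1

/-- The linear operator `Φ(x) = x + x_2 e_{n-2k}` (where `x_2` is the
`e_2`-coordinate of `x`) is a local automorphism of `μ₁` but not an automorphism. -/
theorem stmt12 (K : Type*) [Field K] (m k : ℕ) :
    ∃ Φ : MuV m k K →ₗ[K] MuV m k K,
      (∀ x : MuV m k K, Φ x = x + (x.1 ⟨1, by omega⟩) • eb K m k ⟨m + 3, by omega⟩) ∧
      IsMu1LocAut m k Φ ∧ ¬ IsMu1Aut m k Φ := by
  exact ⟨mu1Phi K m k, mu1Phi_apply, isMu1LocAut_mu1Phi, not_isMu1Aut_mu1Phi⟩
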